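/- arXiv:1201.6497 — 3 statements merged into one kernel-verified Lean document; each statement's English description precedes it below -/
import Mathlib

section
/- Let (X,T) be a topological dynamical system and F = {f_n} a subadditive potential on X. Fix a positive integer k and set C = 4·max_{1≤j≤2k} max_{x∈X} |f_j(x)|. Then for every η > 0 there exists ε₀ > 0 such that for all 0 < ε < ε₀, all n ≥ 1 and all x ∈ X, sup_{y ∈ B_n(x,ε)} f_n(y) ≤ Σ_{i=0}^{n−1} (1/k) f_k(T^i x) + nη + C. -/
open MeasureTheory Filter Set Topology
open scoped ENNReal NNReal

noncomputable section

variable {X : Type*}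

/-- The Bowen ball `B_n(x, ε)` for the map `T`. -/
def bowenBall [PseudoMetricSpace X] (T : X → X) (n : ℕ) (x : X) (ε : ℝ) : Set X :=
  {y | ∀ i < n, dist (T^[i] x) (T^[i] y) < ε}

/-- Supremum of `g` over the Bowen ball `B_n(x,ε)`. -/
def supBowen [PseudoMetricSpace X] (T : X → X) (g : X → ℝ) (n : ℕ) (x : X) (ε : ℝ) : ℝ :=
  sSup (g '' bowenBall T n x ε)

/-- A subadditive potential: a sequence of continuous functions `f n` (for `n ≥ 1`)
with `f (n+m) x ≤ f n x + f m (T^[n] x)`. -/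
def IsSubadditivePotential [TopologicalSpace X] (T : X → X) (f : ℕ → X → ℝ) : Prop :=
  (∀ n, 1 ≤ n → Continuous (f n)) ∧
    ∀ n m, 1 ≤ n → 1 ≤ m → ∀ x : X, f (n + m) x ≤ f n x + f m (T^[n] x)

/-- A supadditive potential. -/
def IsSupadditivePotential [TopologicalSpace X] (T : X → X) (f : ℕ → X → ℝ) : Prop :=
  (∀ n, 1 ≤ n → Continuous (f n)) ∧
    ∀ n m, 1 ≤ n → 1 ≤ m → ∀ x : X, f (n + m) x ≥ f n x + f m (T^[n] x)

/-- The additive potential generated by a function `ψ` (Birkhoff sums). -/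
def birkhoffPot (T : X → X) (ψ : X → ℝ) : ℕ → X → ℝ :=
  fun n x => ∑ i ∈ Finset.range n, ψ (T^[i] x)

section Carath

variable [PseudoMetricSpace X]

/-- Generic Carathéodory sum `M(Z,·,s,N,ε)`; the weight `w n x ε` is the exponent
attached to the Bowen ball `B_n(x,ε)`. -/
def Mcara (T : X → X) (w : ℕ → X → ℝ → ℝ) (Z : Set X) (s : ℝ) (N : ℕ) (ε : ℝ) : ℝ≥0∞ :=
  ⨅ (c : Set (X × ℕ)) (_ : ∀ p ∈ c, N ≤ p.2)
    (_ : Z ⊆ ⋃ p ∈ c, bowenBall T p.2 p.1 ε),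
    ∑' p : c, ENNReal.ofReal
      (Real.exp (-s * ((p : X × ℕ).2 : ℝ) + w (p : X × ℕ).2 (p : X × ℕ).1 ε))

/-- `m(Z,·,s,ε) = lim_{N→∞} M(Z,·,s,N,ε)` (the limit of the monotone quantity). -/
def mcara (T : X → X) (w : ℕ → X → ℝ → ℝ) (Z : Set X) (s ε : ℝ) : ℝ≥0∞ :=
  ⨆ N, Mcara T w Z s N ε

/-- Carathéodory (topological) pressure on `Z` at scale `ε`. -/
def cPressEps (T : X → X) (w : ℕ → X → ℝ → ℝ) (Z : Set X) (ε : ℝ) : ℝ :=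
  sInf {s : ℝ | mcara T w Z s ε = 0}

/-- Carathéodory (topological) pressure `P_Z(T,·)`. -/
def cPress (T : X → X) (w : ℕ → X → ℝ → ℝ) (Z : Set X) : ℝ :=
  liminf (fun ε => cPressEps T w Z ε) (𝓝[>] (0 : ℝ))

/-- `Λ(Z,·,N,ε)`: covers with Bowen balls all of order `N`. -/
def lamCov (T : X → X) (w : ℕ → X → ℝ → ℝ) (Z : Set X) (N : ℕ) (ε : ℝ) : ℝ≥0∞ :=
  ⨅ (c : Set X) (_ : Z ⊆ ⋃ x ∈ c, bowenBall T N x ε),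
    ∑' x : c, ENNReal.ofReal (Real.exp (w N (x : X) ε))

/-- Lower capacity pressure at scale `ε`. -/
def CPlowEps (T : X → X) (w : ℕ → X → ℝ → ℝ) (Z : Set X) (ε : ℝ) : ℝ :=
  liminf (fun N : ℕ => (N : ℝ)⁻¹ * Real.log (lamCov T w Z N ε).toReal) atTop

/-- Upper capacity pressure at scale `ε`. -/
def CPupEps (T : X → X) (w : ℕ → X → ℝ → ℝ) (Z : Set X) (ε : ℝ) : ℝ :=
  limsup (fun N : ℕ => (N : ℝ)⁻¹ * Real.log (lamCov T w Z N ε).toReal) atTop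

def CPlow (T : X → X) (w : ℕ → X → ℝ → ℝ) (Z : Set X) : ℝ :=
  liminf (fun ε => CPlowEps T w Z ε) (𝓝[>] (0 : ℝ))

def CPup (T : X → X) (w : ℕ → X → ℝ → ℝ) (Z : Set X) : ℝ :=
  liminf (fun ε => CPupEps T w Z ε) (𝓝[>] (0 : ℝ))

/-- The subadditive weight: `sup_{y ∈ B_n(x,ε)} f_n(y)`. -/
def wSub (T : X → X) (f : ℕ → X → ℝ) : ℕ → X → ℝ → ℝ :=
  fun n x ε => supBowen T (f n) n x ε

/-- The supadditive weight: the value `f_n(x)` at the centre. -/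
def wSup (f : ℕ → X → ℝ) : ℕ → X → ℝ → ℝ :=
  fun n x _ => f n x

end Carath

section MeasDefs

variable [PseudoMetricSpace X] [MeasurableSpace X]

/-- `P_μ(T,·,n,ε,δ)` via `(n,ε,δ)`-spanning sets. -/
def spanPress (T : X → X) (w : ℕ → X → ℝ → ℝ) (μ : Measure X) (n : ℕ) (ε δ : ℝ) : ℝ :=
  sInf { r : ℝ | ∃ E : Finset X,
    ENNReal.ofReal (1 - δ) ≤ μ (⋃ x ∈ E, bowenBall T n x ε) ∧
    r = ∑ x ∈ E, Real.exp (w n x ε) }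

def spanPressEpsDelta (T : X → X) (w : ℕ → X → ℝ → ℝ) (μ : Measure X) (ε δ : ℝ) : ℝ :=
  limsup (fun n : ℕ => (n : ℝ)⁻¹ * Real.log (spanPress T w μ n ε δ)) atTop

def spanPressDelta (T : X → X) (w : ℕ → X → ℝ → ℝ) (μ : Measure X) (δ : ℝ) : ℝ :=
  liminf (fun ε => spanPressEpsDelta T w μ ε δ) (𝓝[>] (0 : ℝ))

/-- The measure-theoretic pressure `P_μ(T,·)`. -/
def measPress (T : X → X) (w : ℕ → X → ℝ → ℝ) (μ : Measure X) : ℝ :=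
  liminf (fun δ => spanPressDelta T w μ δ) (𝓝[>] (0 : ℝ))

/-- `P*_μ(T,·,ε) = inf {P_Z(T,·,ε) : μ Z = 1}`. -/
def cPressStarEps (T : X → X) (w : ℕ → X → ℝ → ℝ) (μ : Measure X) (ε : ℝ) : ℝ :=
  sInf { p : ℝ | ∃ Z : Set X, μ Z = 1 ∧ p = cPressEps T w Z ε }

/-- `P*_μ(T,·)`. -/
def cPressStar (T : X → X) (w : ℕ → X → ℝ → ℝ) (μ : Measure X) : ℝ :=
  liminf (fun ε => cPressStarEps T w μ ε) (𝓝[>] (0 : ℝ))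

def CPlowStarEps (T : X → X) (w : ℕ → X → ℝ → ℝ) (μ : Measure X) (ε : ℝ) : ℝ :=
  liminf (fun δ : ℝ =>
      sInf { p : ℝ | ∃ Z : Set X, ENNReal.ofReal (1 - δ) ≤ μ Z ∧ p = CPlowEps T w Z ε })
    (𝓝[>] (0 : ℝ))

def CPupStarEps (T : X → X) (w : ℕ → X → ℝ → ℝ) (μ : Measure X) (ε : ℝ) : ℝ :=
  liminf (fun δ : ℝ =>
      sInf { p : ℝ | ∃ Z : Set X, ENNReal.ofReal (1 - δ) ≤ μ Z ∧ p = CPupEps T w Z ε })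
    (𝓝[>] (0 : ℝ))

def CPlowStar (T : X → X) (w : ℕ → X → ℝ → ℝ) (μ : Measure X) : ℝ :=
  liminf (fun ε => CPlowStarEps T w μ ε) (𝓝[>] (0 : ℝ))

def CPupStar (T : X → X) (w : ℕ → X → ℝ → ℝ) (μ : Measure X) : ℝ :=
  liminf (fun ε => CPupStarEps T w μ ε) (𝓝[>] (0 : ℝ))

/-- `F_*(μ) = inf_{n ≥ 1} (1/n)∫ f_n dμ` (subadditive case). -/
def potStarInf (f : ℕ → X → ℝ) (μ : Measure X) : ℝ :=
  sInf { r : ℝ | ∃ n : ℕ, 1 ≤ n ∧ r = (n : ℝ)⁻¹ * ∫ x, f n x ∂μ }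

/-- `Φ_*(μ) = sup_{n ≥ 1} (1/n)∫ φ_n dμ` (supadditive case). -/
def potStarSup (f : ℕ → X → ℝ) (μ : Measure X) : ℝ :=
  sSup { r : ℝ | ∃ n : ℕ, 1 ≤ n ∧ r = (n : ℝ)⁻¹ * ∫ x, f n x ∂μ }

/-- The Brin–Katok local entropy of `μ` at `x` equals `h`. -/
def LocalEntEq (T : X → X) (μ : Measure X) (x : X) (h : ℝ) : Prop :=
  Tendsto (fun ε : ℝ =>
      limsup (fun n : ℕ => (n : ℝ)⁻¹ * (-(Real.log ((μ (bowenBall T n x ε)).toReal)))) atTop)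
    (𝓝[>] (0 : ℝ)) (𝓝 h)

end MeasDefs

section Entropy

variable [MeasurableSpace X]

/-- Entropy of the `n`-th dynamical refinement of the finite partition `P`. -/
def dynH (T : X → X) (μ : Measure X) {k : ℕ} (P : Fin k → Set X) (n : ℕ) : ℝ :=
  ∑ a : Fin n → Fin k,
    Real.negMulLog (μ (⋂ i : Fin n, T^[(i : ℕ)] ⁻¹' P (a i))).toReal

/-- The Kolmogorov–Sinai (measure-theoretic) entropy of `T` w.r.t. `μ`: the supremum,
over finite measurable partitions `P`, of `lim_n (1/n) H(⋁_{i<n} T^{-i}P)`. -/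
def ksEntropy (T : X → X) (μ : Measure X) : ℝ :=
  sSup { h : ℝ | ∃ (k : ℕ) (P : Fin k → Set X),
    (∀ i, MeasurableSet (P i)) ∧ Pairwise (Function.onFun Disjoint P) ∧
    (⋃ i, P i) = univ ∧
    h = liminf (fun n : ℕ => (n : ℝ)⁻¹ * dynH T μ P n) atTop }

end Entropy

end

private lemma chain_aux {X : Type*} (T : X → X) (f : ℕ → X → ℝ)
    (hsub : ∀ n m, 1 ≤ n → 1 ≤ m → ∀ x : X, f (n + m) x ≤ f n x + f m (T^[n] x))
    (k : ℕ) (hk : 1 ≤ k) :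
    ∀ (m s : ℕ), 1 ≤ s → ∀ z : X,
      f (m * k + s) z ≤ (∑ j ∈ Finset.range m, f k (T^[j * k] z)) + f s (T^[m * k] z) := by
  intro m
  induction m with
  | zero => intro s hs z; simp
  | succ m ih =>
    intro s hs z
    have h1 : f ((m + 1) * k + s) z ≤ f k z + f (m * k + s) (T^[k] z) := by
      have h := hsub k (m * k + s) hk (by omega) z
      have he : k + (m * k + s) = (m + 1) * k + s := by ring
      rwa [he] at h
    have h2 := ih s hs (T^[k] z)
    have h3 : ∑ j ∈ Finset.range (m + 1), f k (T^[j * k] z)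
        = (∑ j ∈ Finset.range m, f k (T^[j * k] (T^[k] z))) + f k z := by
      rw [Finset.sum_range_succ']
      congr 1
      · apply Finset.sum_congr rfl
        intro j _
        rw [← Function.iterate_add_apply]
        congr 1
        ring
      · simp
    have h4 : T^[m * k] (T^[k] z) = T^[(m + 1) * k] z := by
      rw [← Function.iterate_add_apply]
      congr 1
      ring
    rw [h3]
    rw [h4] at h2
    linarith

private lemma grid_aux (g : ℕ → ℝ) (k : ℕ) :
    ∀ m : ℕ, ∑ l ∈ Finset.range k, ∑ j ∈ Finset.range m, g (l + j * k)
      = ∑ i ∈ Finset.range (m * k), g i := by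
  intro m
  induction m with
  | zero => simp
  | succ m ih =>
    have h1 : (m + 1) * k = m * k + k := by ring
    rw [h1, Finset.sum_range_add, ← ih, ← Finset.sum_add_distrib]
    apply Finset.sum_congr rfl
    intro l _
    rw [Finset.sum_range_succ]
    congr 2
    omega

/-- **Lemma 3.2.** For a subadditive potential and a fixed `k ≥ 1`, with
`C = 4·max_{1 ≤ j ≤ 2k} max_x |f_j(x)|`, for every `η > 0` there is `ε₀ > 0` such that
for all `0 < ε < ε₀`, all `n ≥ 1` and all `x`,
`sup_{y ∈ B_n(x,ε)} f_n(y) ≤ Σ_{i<n} (1/k) f_k(T^i x) + nη + C`. -/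
theorem subadditive_sup_bowen_bound
    {X : Type*} [MetricSpace X] [CompactSpace X]
    (T : X → X) (hT : Continuous T)
    (f : ℕ → X → ℝ) (hf : IsSubadditivePotential T f)
    (k : ℕ) (hk : 1 ≤ k)
    (C : ℝ) (hC : C = 4 * sSup { r : ℝ | ∃ (j : ℕ) (x : X), 1 ≤ j ∧ j ≤ 2 * k ∧ r = |f j x| }) :
    ∀ η : ℝ, 0 < η → ∃ ε₀ : ℝ, 0 < ε₀ ∧ ∀ ε : ℝ, 0 < ε → ε < ε₀ →
      ∀ n : ℕ, 1 ≤ n → ∀ x : X,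
        supBowen T (f n) n x ε ≤
          (∑ i ∈ Finset.range n, (k : ℝ)⁻¹ * f k (T^[i] x)) + n * η + C := by
  obtain ⟨hcont, hsub⟩ := hf
  set S : Set ℝ := { r : ℝ | ∃ (j : ℕ) (x : X), 1 ≤ j ∧ j ≤ 2 * k ∧ r = |f j x| } with hSdef
  set M : ℝ := sSup S with hMdef
  -- S is bounded above
  have hbdd : BddAbove S := by
    have h1 : ∀ j : ℕ, ∃ B : ℝ, ∀ x : X, 1 ≤ j → |f j x| ≤ B := by
      intro j
      by_cases hj : 1 ≤ j
      · obtain ⟨B, hB⟩ := isCompact_univ.exists_bound_of_continuousOn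
          (hcont j hj).continuousOn
        exact ⟨B, fun x _ => by simpa using hB x (mem_univ x)⟩
      · exact ⟨0, fun x hx => absurd hx hj⟩
    choose g hg using h1
    refine ⟨∑ j ∈ Finset.Icc 1 (2 * k), max (g j) 0, ?_⟩
    rintro r ⟨j, x, hj1, hj2, rfl⟩
    calc |f j x| ≤ g j := hg j x hj1
      _ ≤ max (g j) 0 := le_max_left _ _
      _ ≤ ∑ j' ∈ Finset.Icc 1 (2 * k), max (g j') 0 :=
        Finset.single_le_sum (fun i _ => le_max_right (g i) 0)
          (Finset.mem_Icc.mpr ⟨hj1, hj2⟩)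
  have hM : ∀ (j : ℕ) (x : X), 1 ≤ j → j ≤ 2 * k → |f j x| ≤ M :=
    fun j x h1 h2 => le_csSup hbdd ⟨j, x, h1, h2, rfl⟩
  intro η hη
  have hucont : UniformContinuous (f k) :=
    CompactSpace.uniformContinuous_of_continuous (hcont k hk)
  rw [Metric.uniformContinuous_iff] at hucont
  obtain ⟨ε₀, hε₀, hδ⟩ := hucont η hη
  refine ⟨ε₀, hε₀, ?_⟩
  intro ε hε hεε₀ n hn x
  have hM0 : (0 : ℝ) ≤ M := le_trans (abs_nonneg _) (hM 1 x le_rfl (by omega))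
  have hkR : (0 : ℝ) < (k : ℝ) := by exact_mod_cast hk
  -- pointwise claim
  have key : ∀ y ∈ bowenBall T n x ε,
      f n y ≤ (∑ i ∈ Finset.range n, (k : ℝ)⁻¹ * f k (T^[i] x)) + n * η + C := by
    intro y hy
    have hdist : ∀ i < n, f k (T^[i] y) ≤ f k (T^[i] x) + η := by
      intro i hi
      have h1 : dist (T^[i] x) (T^[i] y) < ε₀ := lt_trans (hy i hi) hεε₀
      have h2 := hδ h1
      rw [Real.dist_eq] at h2
      have := abs_lt.mp h2
      linarith [this.1, this.2]
    have hfk_lb : ∀ i : ℕ, -M ≤ f k (T^[i] x) := by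
      intro i
      have := hM k (T^[i] x) hk (by omega)
      have := abs_le.mp this
      linarith [this.1]
    have hsum_lb : ∀ p : ℕ, -((p : ℝ) * (k : ℝ)⁻¹ * M) ≤ ∑ i ∈ Finset.range p, (k : ℝ)⁻¹ * f k (T^[i] x) := by
      intro p
      have hterm : ∀ i ∈ Finset.range p, -((k : ℝ)⁻¹ * M) ≤ (k : ℝ)⁻¹ * f k (T^[i] x) := by
        intro i _
        have := hfk_lb i
        nlinarith [inv_pos.mpr hkR]
      calc -((p : ℝ) * (k : ℝ)⁻¹ * M) = ∑ _i ∈ Finset.range p, -((k : ℝ)⁻¹ * M) := by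
            rw [Finset.sum_const, Finset.card_range, nsmul_eq_mul]; ring
        _ ≤ _ := Finset.sum_le_sum hterm
    rw [hC]
    by_cases hsmall : n < 2 * k
    · -- small n : f n y ≤ M and RHS ≥ 2M
      have h1 : f n y ≤ M := by
        have := abs_le.mp (hM n y hn (by omega))
        exact this.2
      have h2 := hsum_lb n
      have h3 : (n : ℝ) ≤ 2 * k := by exact_mod_cast le_of_lt hsmall
      have h4 : (0 : ℝ) ≤ (n : ℝ) * η := by positivity
      have h5 : (n : ℝ) * (k : ℝ)⁻¹ ≤ 2 := by
        have hkk : (k : ℝ) * (k : ℝ)⁻¹ = 1 := mul_inv_cancel₀ (ne_of_gt hkR)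
        nlinarith [mul_le_mul_of_nonneg_right h3 (le_of_lt (inv_pos.mpr hkR))]
      nlinarith [mul_nonneg (by linarith : (0 : ℝ) ≤ 2 - (n : ℝ) * (k : ℝ)⁻¹) hM0]
    · push_neg at hsmall
      -- n ≥ 2k; set m = n / k - 1
      set m : ℕ := n / k - 1 with hm
      have hdk : 2 ≤ n / k :=
        (Nat.le_div_iff_mul_le (show 0 < k by omega)).mpr (by omega)
      have hmk : m * k + k = (n / k) * k := by
        have : m + 1 = n / k := by omega
        calc m * k + k = (m + 1) * k := by ring
          _ = (n / k) * k := by rw [this]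
      have hdiv : (n / k) * k + n % k = n := by
        rw [Nat.mul_comm]; exact Nat.div_add_mod n k
      have hmkn : m * k + k + n % k = n := by omega
      have hmodk : n % k < k := Nat.mod_lt _ (by omega)
      have hmn : m ≤ n := by
        have : m * k ≤ n := by omega
        calc m ≤ m * k := Nat.le_mul_of_pos_right m (by omega)
          _ ≤ n := this
      -- per-offset bound
      have claim : ∀ l ∈ Finset.range k,
          f n y ≤ M + ((∑ j ∈ Finset.range m, f k (T^[l + j * k] x)) + m * η) + M := by
        intro l hl
        rw [Finset.mem_range] at hl
        set r : ℕ := n - l - m * k with hr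
        have hr1 : 1 ≤ r := by omega
        have hr2 : r ≤ 2 * k := by omega
        have hnl : n - l = m * k + r := by omega
        -- step 1 : f (n - l) (T^[l] y) ≤ Σ_j f k (T^[l + j*k] y) + f r (T^[l + m*k] y)
        have step1 : f (n - l) (T^[l] y)
            ≤ (∑ j ∈ Finset.range m, f k (T^[l + j * k] y)) + f r (T^[m * k + l] y) := by
          have h := chain_aux T f hsub k hk m r hr1 (T^[l] y)
          rw [hnl]
          have e1 : ∀ j : ℕ, T^[j * k] (T^[l] y) = T^[l + j * k] y := by
            intro j
            rw [← Function.iterate_add_apply]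
            congr 1
            omega
          have e2 : T^[m * k] (T^[l] y) = T^[m * k + l] y := by
            rw [← Function.iterate_add_apply]
          calc f (m * k + r) (T^[l] y)
              ≤ (∑ j ∈ Finset.range m, f k (T^[j * k] (T^[l] y))) + f r (T^[m * k] (T^[l] y)) := h
            _ = (∑ j ∈ Finset.range m, f k (T^[l + j * k] y)) + f r (T^[m * k + l] y) := by
                rw [e2]
                congr 1
                exact Finset.sum_congr rfl fun j _ => by rw [e1]
        -- step 2 : replace y by x in the middle sum
        have step2 : (∑ j ∈ Finset.range m, f k (T^[l + j * k] y))
            ≤ (∑ j ∈ Finset.range m, f k (T^[l + j * k] x)) + m * η := by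
          have : ∀ j ∈ Finset.range m, f k (T^[l + j * k] y) ≤ f k (T^[l + j * k] x) + η := by
            intro j hj
            rw [Finset.mem_range] at hj
            exact hdist (l + j * k) (by
              have : l + j * k + k ≤ k + m * k := by
                have : j * k + k ≤ m * k := by
                  calc j * k + k = (j + 1) * k := by ring
                    _ ≤ m * k := Nat.mul_le_mul_right k (by omega)
                omega
              omega)
          calc (∑ j ∈ Finset.range m, f k (T^[l + j * k] y))
              ≤ ∑ j ∈ Finset.range m, (f k (T^[l + j * k] x) + η) := Finset.sum_le_sum this
            _ = (∑ j ∈ Finset.range m, f k (T^[l + j * k] x)) + m * η := by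
                rw [Finset.sum_add_distrib, Finset.sum_const, Finset.card_range, nsmul_eq_mul]
        have hrM : f r (T^[m * k + l] y) ≤ M := (abs_le.mp (hM r _ hr1 hr2)).2
        by_cases hl0 : l = 0
        · subst hl0
          have : f n y ≤ (∑ j ∈ Finset.range m, f k (T^[0 + j * k] y)) + f r (T^[m * k + 0] y) := by
            have := step1
            simpa using this
          simp only [Nat.zero_add] at this step2 ⊢
          linarith
        · have hl1 : 1 ≤ l := by omega
          have hsplit : f n y ≤ f l y + f (n - l) (T^[l] y) := by
            have h := hsub l (n - l) hl1 (by omega) y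
            have : l + (n - l) = n := by omega
            rwa [this] at h
          have hlM : f l y ≤ M := (abs_le.mp (hM l y hl1 (by omega))).2
          linarith
      -- sum the claim over l ∈ range k
      have hsumk : (k : ℝ) * f n y
          ≤ (k : ℝ) * M + ((∑ i ∈ Finset.range (m * k), f k (T^[i] x)) + (k : ℝ) * (m * η))
            + (k : ℝ) * M := by
        have h1 : ∑ _l ∈ Finset.range k, f n y ≤
            ∑ l ∈ Finset.range k,
              (M + ((∑ j ∈ Finset.range m, f k (T^[l + j * k] x)) + m * η) + M) :=
          Finset.sum_le_sum claim
        rw [Finset.sum_const, Finset.card_range, nsmul_eq_mul] at h1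
        have h2 : ∑ l ∈ Finset.range k,
              (M + ((∑ j ∈ Finset.range m, f k (T^[l + j * k] x)) + m * η) + M)
            = (k : ℝ) * M + ((∑ i ∈ Finset.range (m * k), f k (T^[i] x)) + (k : ℝ) * (m * η))
              + (k : ℝ) * M := by
          simp only [Finset.sum_add_distrib, Finset.sum_const, Finset.card_range,
            nsmul_eq_mul]
          rw [grid_aux (fun i => f k (T^[i] x)) k m]
        linarith [h1, le_of_eq h2]
      -- compare Σ_{i < m*k} with Σ_{i < n}
      have hcomp : (∑ i ∈ Finset.range (m * k), f k (T^[i] x))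
          ≤ (∑ i ∈ Finset.range n, f k (T^[i] x)) + 2 * (k : ℝ) * M := by
        have hn' : n = m * k + (n - m * k) := by omega
        have h1 : ∑ i ∈ Finset.range n, f k (T^[i] x)
            = (∑ i ∈ Finset.range (m * k), f k (T^[i] x))
              + ∑ i ∈ Finset.range (n - m * k), f k (T^[m * k + i] x) := by
          conv_lhs => rw [hn']
          exact Finset.sum_range_add _ _ _
        have h2 : -(((n - m * k : ℕ) : ℝ) * M)
            ≤ ∑ i ∈ Finset.range (n - m * k), f k (T^[m * k + i] x) := by
          have : ∀ i ∈ Finset.range (n - m * k), -M ≤ f k (T^[m * k + i] x) :=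
            fun i _ => hfk_lb _
          calc -(((n - m * k : ℕ) : ℝ) * M)
              = ∑ _i ∈ Finset.range (n - m * k), (-M : ℝ) := by
                rw [Finset.sum_const, Finset.card_range, nsmul_eq_mul]; ring
            _ ≤ _ := Finset.sum_le_sum this
        have h3 : ((n - m * k : ℕ) : ℝ) ≤ 2 * (k : ℝ) := by
          have : n - m * k ≤ 2 * k := by omega
          exact_mod_cast this
        nlinarith
      -- finish
      have hfin : (k : ℝ) * f n y
          ≤ (∑ i ∈ Finset.range n, f k (T^[i] x)) + (k : ℝ) * ((n : ℝ) * η)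
            + (k : ℝ) * (4 * M) := by
        have hmn' : (m : ℝ) ≤ (n : ℝ) := by exact_mod_cast hmn
        have hmeta : (k : ℝ) * ((m : ℝ) * η) ≤ (k : ℝ) * ((n : ℝ) * η) :=
          mul_le_mul_of_nonneg_left (mul_le_mul_of_nonneg_right hmn' (le_of_lt hη))
            (le_of_lt hkR)
        linarith
      have hgoal : f n y ≤ (k : ℝ)⁻¹ * (∑ i ∈ Finset.range n, f k (T^[i] x)) + (n : ℝ) * η + 4 * M := by
        have hkk : (k : ℝ)⁻¹ * (k : ℝ) = 1 := inv_mul_cancel₀ (ne_of_gt hkR)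
        have := mul_le_mul_of_nonneg_left hfin (le_of_lt (inv_pos.mpr hkR))
        calc f n y = (k : ℝ)⁻¹ * ((k : ℝ) * f n y) := by rw [← mul_assoc, hkk, one_mul]
          _ ≤ (k : ℝ)⁻¹ * ((∑ i ∈ Finset.range n, f k (T^[i] x)) + (k : ℝ) * ((n : ℝ) * η)
              + (k : ℝ) * (4 * M)) := this
          _ = (k : ℝ)⁻¹ * (∑ i ∈ Finset.range n, f k (T^[i] x))
              + ((k : ℝ)⁻¹ * (k : ℝ)) * ((n : ℝ) * η) + ((k : ℝ)⁻¹ * (k : ℝ)) * (4 * M) := by ring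
          _ = (k : ℝ)⁻¹ * (∑ i ∈ Finset.range n, f k (T^[i] x)) + (n : ℝ) * η + 4 * M := by
              rw [hkk]; ring
      rw [Finset.mul_sum] at hgoal
      linarith
  -- from pointwise bound to sup over the Bowen ball
  have hxball : x ∈ bowenBall T n x ε := by
    intro i _
    simp [hε]
  have hne : (f n '' bowenBall T n x ε).Nonempty := ⟨f n x, x, hxball, rfl⟩
  apply csSup_le hne
  rintro r ⟨y, hy, rfl⟩
  exact key y hy
end

section
/- Let (X,T) be a topological dynamical system and F = {f_n} a subadditive potential on X. Then for every x ∈ X and every positive integer n, writing n = sk + l with s ≥ 0 and 0 ≤ l < k, one has f_n(x) ≤ 4C₁ + Σ_{i=0}^{n−1} (1/k) f_k(T^i x), where C₁ = max_{1≤j≤2k} max_{x∈X} |f_j(x)|. -/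
open MeasureTheory Filter Set Topology
open scoped ENNReal NNReal

/-!
For each residue `j < k`, cut the orbit segment of length `n` into a head of length `j`,
`s = n / k - 1` blocks of length `k`, and a tail of length between `1` and `2k`.
Subadditivity bounds `f n x` by the sum of `f k` over the blocks plus `2 C₁` for head and tail.
Averaging over `j` turns the blocks into the Birkhoff sum of `f k` up to time `s k`, which
differs from the sum up to time `n` by fewer than `2k` terms, each at least `-C₁`.
-/

open Finset

lemma Finset.sum_range_sum_range_mul_add {M : Type*} [AddCommMonoid M] (g : ℕ → M) (k s : ℕ) :
    ∑ j ∈ range k, ∑ m ∈ range s, g (m * k + j) = ∑ i ∈ range (s * k), g i := by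
  induction s with
  | zero => simp
  | succ s ih => simp only [sum_range_succ, sum_add_distrib, ih, add_mul, one_mul, sum_range_add]

lemma Finset.sum_range_le_sum_range_add_mul {g : ℕ → ℝ} {C : ℝ} (hg : ∀ i, -C ≤ g i)
    {m n : ℕ} (hmn : m ≤ n) :
    ∑ i ∈ range m, g i ≤ ∑ i ∈ range n, g i + (n - m : ℕ) * C := by
  obtain ⟨d, rfl⟩ := Nat.exists_eq_add_of_le hmn
  have htail : d • (-C) ≤ ∑ i ∈ range d, g (m + i) := by
    simpa using card_nsmul_le_sum (range d) (fun i => g (m + i)) (-C) fun i _ => hg (m + i)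
  rw [sum_range_add, Nat.add_sub_cancel_left]
  rw [nsmul_eq_mul] at htail
  linarith

namespace IsSubadditivePotential

variable [TopologicalSpace X] {T : X → X} {f : ℕ → X → ℝ}

lemma bddAbove_abs [CompactSpace X] (hf : IsSubadditivePotential T f) (N : ℕ) :
    BddAbove {r : ℝ | ∃ (j : ℕ) (x : X), 1 ≤ j ∧ j ≤ N ∧ r = |f j x|} := by
  refine ((Set.finite_Icc 1 N).bddAbove_biUnion.mpr fun j hj =>
    (isCompact_range (hf.1 j hj.1).abs).bddAbove).mono ?_
  rintro _ ⟨j, x, h1, hN, rfl⟩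
  exact Set.mem_biUnion ⟨h1, hN⟩ ⟨x, rfl⟩

lemma apply_mul_add_le (hf : IsSubadditivePotential T f) {k t : ℕ} (hk : 1 ≤ k) (ht : 1 ≤ t)
    (s : ℕ) (y : X) :
    f (s * k + t) y ≤ ∑ m ∈ range s, f k (T^[m * k] y) + f t (T^[s * k] y) := by
  induction s generalizing y with
  | zero => simp
  | succ s ih =>
    have hsplit := hf.2 k (s * k + t) hk (by omega) y
    have hiter : ∀ m, T^[m * k] (T^[k] y) = T^[(m + 1) * k] y := fun m => by
      rw [← Function.iterate_add_apply, add_one_mul]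
    rw [show (s + 1) * k + t = k + (s * k + t) by ring, sum_range_succ']
    have hrest := ih (T^[k] y)
    simp only [hiter] at hrest
    simp only [zero_mul, Function.iterate_zero_apply]
    linarith

variable {k : ℕ} {C : ℝ}

lemma apply_le_two_mul_add_sum_blocks (hf : IsSubadditivePotential T f)
    (hC : ∀ i, 1 ≤ i → i ≤ 2 * k → ∀ y, |f i y| ≤ C) {n j : ℕ} (hn : 1 ≤ n) (hj : j < k)
    (x : X) :
    f n x ≤ 2 * C + ∑ m ∈ range (n / k - 1), f k (T^[m * k + j] x) := by
  have hC₀ : 0 ≤ C := (abs_nonneg _).trans (hC k (by omega) (by omega) x)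
  have hle : ∀ i, 1 ≤ i → i ≤ 2 * k → ∀ y, f i y ≤ C := fun i h1 h2 y =>
    (le_abs_self _).trans (hC i h1 h2 y)
  set s := n / k - 1
  have hsk : s * k = n / k * k - k := Nat.sub_one_mul _ _
  rcases Nat.lt_or_ge n (2 * k) with hsmall | hlarge
  · have hs : s = 0 := by have := Nat.div_lt_of_lt_mul (by omega : n < k * 2); omega
    simp only [hs, range_zero, sum_empty]
    linarith [hle n hn hsmall.le x]
  · have hq : n / k * k ≤ n := Nat.div_mul_le_self n k
    have hq' : n < n / k * k + k := Nat.lt_div_mul_add (by omega)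
    have h2k : 2 * k ≤ n / k * k :=
      Nat.mul_le_mul_right k ((Nat.le_div_iff_mul_le (by omega)).2 hlarge)
    set t := n - j - s * k
    have hblocks := hf.apply_mul_add_le (by omega : 1 ≤ k) (by omega : 1 ≤ t) s (T^[j] x)
    simp only [← Function.iterate_add_apply] at hblocks
    have htail := hle t (by omega) (by omega) (T^[s * k + j] x)
    rcases Nat.eq_zero_or_pos j with rfl | hj₀
    · rw [show n = s * k + t by omega]
      simp only [add_zero, Function.iterate_zero_apply] at hblocks htail ⊢
      linarith
    · have hhead := hf.2 j (s * k + t) hj₀ (by omega) x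
      rw [show j + (s * k + t) = n by omega] at hhead
      linarith [hle j hj₀ (by omega) x]

lemma natCast_mul_apply_le (hf : IsSubadditivePotential T f) (hk : 1 ≤ k)
    (hC : ∀ i, 1 ≤ i → i ≤ 2 * k → ∀ y, |f i y| ≤ C) {n : ℕ} (hn : 1 ≤ n) (x : X) :
    (k : ℝ) * f n x ≤ 4 * k * C + ∑ i ∈ range n, f k (T^[i] x) := by
  set s := n / k - 1
  have hsk : s * k = n / k * k - k := Nat.sub_one_mul _ _
  have hq : n / k * k ≤ n := Nat.div_mul_le_self n k
  have hq' : n < n / k * k + k := Nat.lt_div_mul_add (by omega)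
  have hsn : s * k ≤ n := by omega
  have hlow : ∀ i, -C ≤ f k (T^[i] x) := fun i =>
    neg_le_of_abs_le (hC k hk (by omega) _)
  have hC₀ : 0 ≤ C := (abs_nonneg _).trans (hC k hk (by omega) x)
  have hgap : ((n - s * k : ℕ) : ℝ) * C ≤ 2 * k * C := by
    gcongr; exact_mod_cast (by omega : n - s * k ≤ 2 * k)
  calc (k : ℝ) * f n x = ∑ _j ∈ range k, f n x := by simp
    _ ≤ ∑ j ∈ range k, (2 * C + ∑ m ∈ range s, f k (T^[m * k + j] x)) :=
        sum_le_sum fun j hj => hf.apply_le_two_mul_add_sum_blocks hC hn (mem_range.mp hj) x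
    _ = 2 * k * C + ∑ i ∈ range (s * k), f k (T^[i] x) := by
        rw [sum_add_distrib, sum_range_sum_range_mul_add (fun i => f k (T^[i] x))]
        simp only [sum_const, card_range, nsmul_eq_mul]
        ring
    _ ≤ 4 * k * C + ∑ i ∈ range n, f k (T^[i] x) := by
        linarith [sum_range_le_sum_range_add_mul hlow hsn]

end IsSubadditivePotential

theorem subadditive_block_bound_general
    {X : Type*} [MetricSpace X] [CompactSpace X]
    (T : X → X)
    (f : ℕ → X → ℝ) (hf : IsSubadditivePotential T f)
    (k : ℕ) (hk : 1 ≤ k)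
    (C₁ : ℝ) (hC₁ : C₁ = sSup { r : ℝ | ∃ (j : ℕ) (x : X), 1 ≤ j ∧ j ≤ 2 * k ∧ r = |f j x| }) :
    ∀ (x : X) (n : ℕ), 1 ≤ n →
      f n x ≤ 4 * C₁ + ∑ i ∈ Finset.range n, (k : ℝ)⁻¹ * f k (T^[i] x) := by
  intro x n hn
  have hC : ∀ i, 1 ≤ i → i ≤ 2 * k → ∀ y, |f i y| ≤ C₁ := fun i hi hik y =>
    hC₁ ▸ le_csSup (hf.bddAbove_abs (2 * k)) ⟨i, y, hi, hik, rfl⟩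
  have hk₀ : (0 : ℝ) < k := by exact_mod_cast hk
  rw [← Finset.mul_sum, ← sub_le_iff_le_add', le_inv_mul_iff₀ hk₀]
  linarith [hf.natCast_mul_apply_le hk hC hn x]

/-- For a subadditive potential and a fixed `k ≥ 1`, with
`C₁ = max_{1 ≤ j ≤ 2k} max_x |f_j(x)|`, every `x ∈ X` and `n ≥ 1` satisfy
`f_n(x) ≤ 4C₁ + Σ_{i<n} (1/k) f_k(T^i x)`. -/
theorem subadditive_block_bound
    {X : Type*} [MetricSpace X] [CompactSpace X]
    (T : X → X) (hT : Continuous T)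
    (f : ℕ → X → ℝ) (hf : IsSubadditivePotential T f)
    (k : ℕ) (hk : 1 ≤ k)
    (C₁ : ℝ) (hC₁ : C₁ = sSup { r : ℝ | ∃ (j : ℕ) (x : X), 1 ≤ j ∧ j ≤ 2 * k ∧ r = |f j x| }) :
    ∀ (x : X) (n : ℕ), 1 ≤ n →
      f n x ≤ 4 * C₁ + ∑ i ∈ Finset.range n, (k : ℝ)⁻¹ * f k (T^[i] x) :=
  subadditive_block_bound_general T f hf k hk C₁ hC₁
end

section
/- Let (X,T) be a topological dynamical system and Φ = {φ_n} a supadditive potential on X. Fix a positive integer k. Then for any η > 0 there exists ε₀ > 0 and a constant C (independent of η and ε) such that for all 0 < ε < ε₀, all n ≥ 1, and all x ∈ X, φ_n(x) ≥ sup_{y ∈ B_n(x,ε)} Σ_{i=0}^{n−1} (1/k) φ_k(T^i y) − nη − C. -/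
open MeasureTheory Filter Set Topology
open scoped ENNReal NNReal

/-! Writing `S_n = Σ_{i<n} φ_k ∘ Tⁱ`, the staggered sum `G_n = Σ_{a<k} φ_{n-a} ∘ Tᵃ` satisfies
`G_n ≥ S_k + G_{n-k} ∘ Tᵏ` by splitting each `φ_{n-a}` after `k` steps, exactly as
`S_n = S_k + S_{n-k} ∘ Tᵏ`; so `S_n - G_n` stays bounded. On the other hand supadditivity at
the cut `a` gives `φ_{n-a} ∘ Tᵃ ≤ φ_n - φ_a`, so `G_n ≤ k φ_n + O(1)`. Uniform continuity of
`φ_k` then moves the Birkhoff sum from `x` to any point of `B_n(x, ε)` at cost `n η`. -/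

theorem birkhoffPot_eq_birkhoffSum {X : Type*} (T : X → X) (ψ : X → ℝ) :
    birkhoffPot T ψ = birkhoffSum T ψ :=
  rfl

theorem birkhoffSum_le_mul {X : Type*} {T : X → X} {g : X → ℝ} {M : ℝ} (hg : ∀ x, g x ≤ M)
    (n : ℕ) (x : X) : birkhoffSum T g n x ≤ n * M := by
  simpa [birkhoffSum] using Finset.sum_le_card_nsmul (Finset.range n) _ M fun i _ => hg (T^[i] x)

theorem exists_forall_abs_le_of_continuous {X : Type*} [TopologicalSpace X] [CompactSpace X]
    {f : ℕ → X → ℝ} (hf : ∀ n, 1 ≤ n → Continuous (f n)) (N : ℕ) :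
    ∃ M : ℝ, ∀ j, 1 ≤ j → j ≤ N → ∀ x, |f j x| ≤ M := by
  have hbdd : BddAbove (⋃ j ∈ Finset.Icc 1 N, range fun x => |f j x|) :=
    (Finset.Icc 1 N).finite_toSet.bddAbove_biUnion.2 fun j hj =>
      (isCompact_range (hf j (Finset.mem_Icc.1 hj).1).abs).bddAbove
  obtain ⟨M, hM⟩ := hbdd
  exact ⟨M, fun j h1 h2 x => hM (mem_biUnion (Finset.mem_Icc.2 ⟨h1, h2⟩) (mem_range_self x))⟩

section Staggered

variable {X : Type*} {T : X → X} {φ : ℕ → X → ℝ} {k : ℕ} {M : ℝ}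

def staggeredSum (T : X → X) (φ : ℕ → X → ℝ) (k n : ℕ) (x : X) : ℝ :=
  ∑ a ∈ Finset.range k, φ (n - a) (T^[a] x)

variable (hφ : ∀ n m, 1 ≤ n → 1 ≤ m → ∀ x, φ n x + φ m (T^[n] x) ≤ φ (n + m) x)
include hφ

theorem staggeredSum_le {n : ℕ} (hn : k ≤ n) (hM : ∀ j, 1 ≤ j → j < k → ∀ x, -M ≤ φ j x)
    (hM₀ : 0 ≤ M) (x : X) : staggeredSum T φ k n x ≤ k * φ n x + k * M := by
  have hterm : ∀ a ∈ Finset.range k, φ (n - a) (T^[a] x) ≤ φ n x + M := by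
    intro a ha
    have ha : a < k := Finset.mem_range.1 ha
    rcases Nat.eq_zero_or_pos a with rfl | ha₀
    · simpa using hM₀
    · have hcut := hφ a (n - a) ha₀ (by omega) x
      rw [Nat.add_sub_cancel' (by omega)] at hcut
      linarith [hM a ha₀ ha x]
  calc staggeredSum T φ k n x ≤ ∑ _a ∈ Finset.range k, (φ n x + M) := Finset.sum_le_sum hterm
    _ = k * φ n x + k * M := by simp

theorem birkhoffSum_add_staggeredSum_le (hk : 1 ≤ k) {n : ℕ} (hn : 2 * k ≤ n) (x : X) :
    birkhoffSum T (φ k) k x + staggeredSum T φ k (n - k) (T^[k] x) ≤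
      staggeredSum T φ k n x := by
  rw [birkhoffSum, staggeredSum, staggeredSum, ← Finset.sum_add_distrib]
  refine Finset.sum_le_sum fun a ha => ?_
  have ha : a < k := Finset.mem_range.1 ha
  have hsplit := hφ k (n - a - k) hk (by omega) (T^[a] x)
  rwa [← Function.iterate_add_apply, add_comm k a, Function.iterate_add_apply,
    Nat.add_sub_cancel' (by omega), Nat.sub_right_comm] at hsplit

theorem birkhoffSum_le_staggeredSum (hk : 1 ≤ k)
    (hM : ∀ j, 1 ≤ j → j ≤ 2 * k → ∀ x, |φ j x| ≤ M) :
    ∀ n, k ≤ n → ∀ x, birkhoffSum T (φ k) n x ≤ staggeredSum T φ k n x + 3 * k * M := by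
  intro n
  induction n using Nat.strong_induction_on with
  | _ n ih =>
    intro hn x
    by_cases hsmall : n < 2 * k
    · have hS : birkhoffSum T (φ k) n x ≤ n * M :=
        birkhoffSum_le_mul (fun y => (abs_le.1 (hM k hk (by omega) y)).2) n x
      have hG : ∑ _a ∈ Finset.range k, -M ≤ staggeredSum T φ k n x :=
        Finset.sum_le_sum fun a ha => by
          have ha : a < k := Finset.mem_range.1 ha
          exact (abs_le.1 (hM (n - a) (by omega) (by omega) _)).1
      have hn' : (n : ℝ) ≤ 2 * k := by exact_mod_cast hsmall.le
      have hM₀ : 0 ≤ M := (abs_nonneg _).trans (hM k hk (by omega) x)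
      simp only [Finset.sum_const, Finset.card_range, nsmul_eq_mul] at hG
      nlinarith
    · have hsplit : birkhoffSum T (φ k) n x =
          birkhoffSum T (φ k) k x + birkhoffSum T (φ k) (n - k) (T^[k] x) := by
        rw [← birkhoffSum_add, Nat.add_sub_cancel' (by omega)]
      have hrec := ih (n - k) (by omega) (by omega) (T^[k] x)
      have hstep := birkhoffSum_add_staggeredSum_le hφ hk (n := n) (by omega) x
      linarith

theorem birkhoffSum_le_mul_add (hk : 1 ≤ k) (hM : ∀ j, 1 ≤ j → j ≤ 2 * k → ∀ x, |φ j x| ≤ M)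
    {n : ℕ} (hn : 1 ≤ n) (x : X) : birkhoffSum T (φ k) n x ≤ k * φ n x + 4 * k * M := by
  have hM₀ : 0 ≤ M := (abs_nonneg _).trans (hM k hk (by omega) x)
  by_cases hkn : k ≤ n
  · have hG := staggeredSum_le hφ hkn (fun j h1 h2 y => (abs_le.1 (hM j h1 (by omega) y)).1) hM₀ x
    have hS := birkhoffSum_le_staggeredSum hφ hk hM n hkn x
    linarith
  · have hS : birkhoffSum T (φ k) n x ≤ n * M :=
      birkhoffSum_le_mul (fun y => (abs_le.1 (hM k hk (by omega) y)).2) n x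
    have hn' : (n : ℝ) ≤ k := by exact_mod_cast (not_le.1 hkn).le
    have hφn := (abs_le.1 (hM n hn (by omega) x)).1
    nlinarith

end Staggered

section Bowen

variable {X : Type*} [PseudoMetricSpace X] {T : X → X} {n : ℕ} {x y : X} {ε : ℝ}

theorem mem_bowenBall_self (hε : 0 < ε) : x ∈ bowenBall T n x ε :=
  fun i _ => by simpa using hε

theorem supBowen_le {g : X → ℝ} {c : ℝ} (hε : 0 < ε) (h : ∀ y ∈ bowenBall T n x ε, g y ≤ c) :
    supBowen T g n x ε ≤ c :=
  csSup_le ⟨g x, mem_image_of_mem g (mem_bowenBall_self hε)⟩ (forall_mem_image.2 h)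

theorem birkhoffSum_le_of_mem_bowenBall {g : X → ℝ} {δ : ℝ}
    (hg : ∀ x y, dist x y < ε → g y ≤ g x + δ) (hy : y ∈ bowenBall T n x ε) :
    birkhoffSum T g n y ≤ birkhoffSum T g n x + n * δ := by
  calc birkhoffSum T g n y ≤ ∑ i ∈ Finset.range n, (g (T^[i] x) + δ) :=
        Finset.sum_le_sum fun i hi => hg _ _ (hy i (Finset.mem_range.1 hi))
    _ = birkhoffSum T g n x + n * δ := by simp [birkhoffSum, Finset.sum_add_distrib]

end Bowen

theorem supadditive_inf_bowen_bound_general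
    {X : Type*} [MetricSpace X] [CompactSpace X]
    (T : X → X)
    (φ : ℕ → X → ℝ) (hφ : IsSupadditivePotential T φ)
    (k : ℕ) (hk : 1 ≤ k) :
    ∃ C : ℝ, ∀ η : ℝ, 0 < η → ∃ ε₀ : ℝ, 0 < ε₀ ∧ ∀ ε : ℝ, 0 < ε → ε < ε₀ →
      ∀ n : ℕ, 1 ≤ n → ∀ x : X,
        supBowen T (birkhoffPot T (fun y => (k : ℝ)⁻¹ * φ k y) n) n x ε - n * η - C ≤
          φ n x := by
  obtain ⟨M, hM⟩ := exists_forall_abs_le_of_continuous hφ.1 (2 * k)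
  refine ⟨4 * M, fun η hη => ?_⟩
  set g : X → ℝ := fun y => (k : ℝ)⁻¹ * φ k y
  have hg : UniformContinuous g :=
    CompactSpace.uniformContinuous_of_continuous (continuous_const.mul (hφ.1 k hk))
  obtain ⟨ε₀, hε₀, hgε₀⟩ := Metric.uniformContinuous_iff.1 hg η hη
  refine ⟨ε₀, hε₀, fun ε hε hεε₀ n hn x => ?_⟩
  rw [birkhoffPot_eq_birkhoffSum]
  have hgx : birkhoffSum T g n x ≤ φ n x + 4 * M := by
    have hk' : (0 : ℝ) < k := by exact_mod_cast hk
    have hkey := birkhoffSum_le_mul_add hφ.2 hk hM hn x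
    have hgk : birkhoffSum T g n x = (k : ℝ)⁻¹ * birkhoffSum T (φ k) n x :=
      (Finset.mul_sum _ _ _).symm
    rw [hgk, inv_mul_le_iff₀ hk']
    linarith
  have hsup : supBowen T (birkhoffSum T g n) n x ε ≤ birkhoffSum T g n x + n * η :=
    supBowen_le hε fun y hy => birkhoffSum_le_of_mem_bowenBall
      (fun a b hab => by linarith [abs_lt.1 (Real.dist_eq _ _ ▸ hgε₀ (hab.trans hεε₀))]) hy
  linarith

/-- **Sublemma 4.10.** For a supadditive potential `Φ` and a fixed `k ≥ 1`, there is a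
constant `C` (independent of `η` and `ε`) such that for every `η > 0` there is
`ε₀ > 0` with `φ_n(x) ≥ sup_{y ∈ B_n(x,ε)} Σ_{i<n} (1/k)φ_k(T^i y) − nη − C`
for all `0 < ε < ε₀`, `n ≥ 1` and `x ∈ X`. -/
theorem supadditive_inf_bowen_bound
    {X : Type*} [MetricSpace X] [CompactSpace X]
    (T : X → X) (hT : Continuous T)
    (φ : ℕ → X → ℝ) (hφ : IsSupadditivePotential T φ)
    (k : ℕ) (hk : 1 ≤ k) :
    ∃ C : ℝ, ∀ η : ℝ, 0 < η → ∃ ε₀ : ℝ, 0 < ε₀ ∧ ∀ ε : ℝ, 0 < ε → ε < ε₀ →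
      ∀ n : ℕ, 1 ≤ n → ∀ x : X,
        supBowen T (birkhoffPot T (fun y => (k : ℝ)⁻¹ * φ k y) n) n x ε - n * η - C ≤
          φ n x :=
  supadditive_inf_bowen_bound_general T φ hφ k hk
end
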